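/- arXiv:1709.06960 — 5 statements merged into one kernel-verified Lean document; each statement's English description precedes it below -/
import Mathlib

section
/- With T_k = A_k - λI as above, let χ_k = det T_k, and let φ_k = det Q_k where Q_k is obtained from T_k by deleting the top row and rightmost column. Then χ_{k+1} = (χ_k)^2 - (φ_k)^2. -/
open Matrix Polynomial

/-- `J_k = diag(1,0,...,0)` of order `2^k`. -/
noncomputable def Jmat (k : ℕ) : Matrix (Fin (2 ^ k)) (Fin (2 ^ k)) ℝ :=
  Matrix.diagonal (fun i => if (i : ℕ) = 0 then 1 else 0)

/-- `J_k' = diag(0,...,0,1)` of order `2^k`. -/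
noncomputable def Jmat' (k : ℕ) : Matrix (Fin (2 ^ k)) (Fin (2 ^ k)) ℝ :=
  Matrix.diagonal (fun i => if (i : ℕ) = 2 ^ k - 1 then 1 else 0)

/-- The equivalence identifying `Fin (2^k) ⊕ Fin (2^k)` with `Fin (2^(k+1))`. -/
def blockEquiv (k : ℕ) : Fin (2 ^ k) ⊕ Fin (2 ^ k) ≃ Fin (2 ^ (k + 1)) :=
  finSumFinEquiv.trans (finCongr (by rw [pow_succ, mul_two]))

/-- The adjacency matrices `A_k`, defined recursively by `A_0 = (0)` and
`A_{k+1} = [[A_k, J_k], [J_k', A_k]]` in block form. -/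
noncomputable def Amat : (k : ℕ) → Matrix (Fin (2 ^ k)) (Fin (2 ^ k)) ℝ
  | 0 => 0
  | (k + 1) => Matrix.reindex (blockEquiv k) (blockEquiv k)
      (Matrix.fromBlocks (Amat k) (Jmat k) (Jmat' k) (Amat k))

/-- `T_k = A_k - λ I`. -/
noncomputable def Tmat (k : ℕ) (l : ℝ) : Matrix (Fin (2 ^ k)) (Fin (2 ^ k)) ℝ :=
  Amat k - l • 1

/-- Characteristic polynomial value `χ_k(λ) = det (A_k - λ I)`. -/
noncomputable def chiA (k : ℕ) (l : ℝ) : ℝ := (Tmat k l).det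

/-- Submatrix obtained by deleting the top row and the rightmost column. -/
noncomputable def delTopRight {n : ℕ} (M : Matrix (Fin n) (Fin n) ℝ) :
    Matrix (Fin (n - 1)) (Fin (n - 1)) ℝ :=
  Matrix.of fun i j => M ⟨i.1 + 1, by have := i.isLt; omega⟩ ⟨j.1, by have := j.isLt; omega⟩

/-- Submatrix obtained by deleting the bottom row and the rightmost column. -/
noncomputable def delBotRight {n : ℕ} (M : Matrix (Fin n) (Fin n) ℝ) :
    Matrix (Fin (n - 1)) (Fin (n - 1)) ℝ :=
  Matrix.of fun i j => M ⟨i.1, by have := i.isLt; omega⟩ ⟨j.1, by have := j.isLt; omega⟩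

/-- `φ_k = det Q_k`, where `Q_k` is `T_k` with top row and right column deleted. -/
noncomputable def phiA (k : ℕ) (l : ℝ) : ℝ := (delTopRight (Tmat k l)).det

/-- `ψ_k = det P_k`, where `P_k` is `T_k` with bottom row and right column deleted. -/
noncomputable def psiA (k : ℕ) (l : ℝ) : ℝ := (delBotRight (Tmat k l)).det

-- ### auxiliary
lemma blockEquiv_inl_val (k : ℕ) (i : Fin (2^k)) :
    ((blockEquiv k (Sum.inl i)) : ℕ) = (i : ℕ) := rfl

lemma blockEquiv_inr_val (k : ℕ) (i : Fin (2^k)) :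
    ((blockEquiv k (Sum.inr i)) : ℕ) = 2^k + (i : ℕ) := rfl

lemma rev_blockEquiv (k : ℕ) (x : Fin (2^k) ⊕ Fin (2^k)) :
    Fin.rev (blockEquiv k x) =
      blockEquiv k (Sum.elim (fun i => Sum.inr i.rev) (fun j => Sum.inl j.rev) x) := by
  have h2 : 2^(k+1) = 2^k + 2^k := by rw [pow_succ, mul_two]
  cases x with
  | inl i =>
    apply Fin.ext
    rw [Fin.val_rev, blockEquiv_inl_val]
    simp only [Sum.elim_inl, blockEquiv_inr_val, Fin.val_rev]
    have := i.isLt; omega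
  | inr i =>
    apply Fin.ext
    rw [Fin.val_rev, blockEquiv_inr_val]
    simp only [Sum.elim_inr, blockEquiv_inl_val, Fin.val_rev]
    have := i.isLt; omega

lemma Jmat_rev (k : ℕ) (i j : Fin (2^k)) : Jmat k i j = Jmat' k i.rev j.rev := by
  simp only [Jmat, Jmat', Matrix.diagonal_apply, Fin.rev_inj]
  by_cases hij : i = j
  · subst hij
    simp only [if_pos rfl]
    have h1 : ((i:ℕ) = 0) ↔ ((i.rev : ℕ) = 2^k - 1) := by
      rw [Fin.val_rev]; have := i.isLt; omega
    by_cases h : (i:ℕ) = 0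
    · rw [if_pos h, if_pos (h1.mp h)]
    · rw [if_neg h, if_neg (fun hc => h (h1.mpr hc))]
  · rw [if_neg hij, if_neg hij]

lemma Jmat'_rev (k : ℕ) (i j : Fin (2^k)) : Jmat' k i j = Jmat k i.rev j.rev := by
  have := Jmat_rev k i.rev j.rev
  rw [Fin.rev_rev, Fin.rev_rev] at this
  rw [this]

lemma Amat_rev (k : ℕ) : ∀ i j, Amat k i j = Amat k i.rev j.rev := by
  induction k with
  | zero => intro i j; simp [Amat]
  | succ k ih =>
    intro i j
    obtain ⟨x, rfl⟩ := (blockEquiv k).surjective i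
    obtain ⟨y, rfl⟩ := (blockEquiv k).surjective j
    rw [rev_blockEquiv, rev_blockEquiv]
    show (Matrix.reindex (blockEquiv k) (blockEquiv k)
      (Matrix.fromBlocks (Amat k) (Jmat k) (Jmat' k) (Amat k))) _ _ = (Matrix.reindex _ _ _) _ _
    simp only [Matrix.reindex_apply, Matrix.submatrix_apply, Equiv.symm_apply_apply]
    cases x with
    | inl a =>
      cases y with
      | inl b => simpa using ih a b
      | inr b => simpa using Jmat_rev k a b
    | inr a =>
      cases y with
      | inl b => simpa using Jmat'_rev k a b
      | inr b => simpa using ih a b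

lemma Tmat_rev (k : ℕ) (l : ℝ) : ∀ i j, Tmat k l i j = Tmat k l i.rev j.rev := by
  intro i j
  simp only [Tmat, Matrix.sub_apply, Matrix.smul_apply, Matrix.one_apply, Fin.rev_inj,
    smul_eq_mul]
  rw [Amat_rev k i j]

lemma Tmat_succ (k : ℕ) (l : ℝ) :
    Tmat (k+1) l = Matrix.reindex (blockEquiv k) (blockEquiv k)
      (Matrix.fromBlocks (Tmat k l) (Jmat k) (Jmat' k) (Tmat k l)) := by
  ext i j
  obtain ⟨x, rfl⟩ := (blockEquiv k).surjective i
  obtain ⟨y, rfl⟩ := (blockEquiv k).surjective j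
  have hone : (1 : Matrix (Fin (2^(k+1))) (Fin (2^(k+1))) ℝ) (blockEquiv k x) (blockEquiv k y)
      = (1 : Matrix (Fin (2^k) ⊕ Fin (2^k)) (Fin (2^k) ⊕ Fin (2^k)) ℝ) x y := by
    simp [Matrix.one_apply, (blockEquiv k).injective.eq_iff]
  simp only [Tmat, Amat, Matrix.sub_apply, Matrix.smul_apply, Matrix.reindex_apply,
    Matrix.submatrix_apply, Equiv.symm_apply_apply, smul_eq_mul, hone]
  cases x <;> cases y <;>
    simp [Matrix.fromBlocks, Tmat, Matrix.one_apply, Matrix.sub_apply]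

lemma delTopRight_eq_submatrix {m : ℕ} (M : Matrix (Fin (m+1)) (Fin (m+1)) ℝ) :
    delTopRight M = M.submatrix (Fin.succAbove 0) (Fin.succAbove (Fin.last m)) := by
  ext i j
  simp only [delTopRight, Matrix.of_apply, Matrix.submatrix_apply, Fin.zero_succAbove,
    Fin.succAbove_last]
  congr 1 <;> exact Fin.ext rfl

lemma key_det {n : ℕ} (hn : 0 < n) (A : Matrix (Fin n) (Fin n) ℝ)
    (hper : ∀ i j, A i j = A i.rev j.rev) (hA : IsUnit A.det) :
    (Matrix.fromBlocks A
      (Matrix.diagonal (fun i : Fin n => if (i : ℕ) = 0 then (1:ℝ) else 0))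
      (Matrix.diagonal (fun i : Fin n => if (i : ℕ) = n - 1 then (1:ℝ) else 0)) A).det
    = A.det ^ 2 - (delTopRight A).det ^ 2 := by
  obtain ⟨m, rfl⟩ := Nat.exists_eq_succ_of_ne_zero hn.ne'
  have : Invertible A := A.invertibleOfIsUnitDet hA
  rw [Matrix.det_fromBlocks₁₁]
  set x : ℝ := ⅟A (Fin.last m) 0 with hx
  set v : Fin (m+1) → ℝ := Pi.single (0 : Fin (m+1)) (1:ℝ) with hv
  have hupd : A - Matrix.diagonal (fun i : Fin (m+1) => if (i : ℕ) = m + 1 - 1 then (1:ℝ) else 0) *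
      ⅟A * Matrix.diagonal (fun i : Fin (m+1) => if (i : ℕ) = 0 then (1:ℝ) else 0)
      = A.updateRow (Fin.last m) (A (Fin.last m) + (-x) • v) := by
    ext i j
    rw [Matrix.sub_apply]
    have hmul : (Matrix.diagonal (fun i : Fin (m+1) => if (i : ℕ) = m + 1 - 1 then (1:ℝ) else 0) *
        ⅟A * Matrix.diagonal (fun i : Fin (m+1) => if (i : ℕ) = 0 then (1:ℝ) else 0)) i j
        = (if (i:ℕ) = m then 1 else 0) * (⅟A) i j * (if (j:ℕ) = 0 then 1 else 0) := by
      rw [Matrix.mul_diagonal, Matrix.diagonal_mul]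
      simp only [Nat.add_sub_cancel]
    rw [hmul]
    by_cases hi : i = Fin.last m
    · subst hi
      rw [Matrix.updateRow_self]
      by_cases hj : j = 0
      · subst hj
        simp [v, Pi.single_apply, Fin.val_last, x]
        ring
      · have : (j:ℕ) ≠ 0 := fun h => hj (Fin.ext h)
        simp [v, Pi.single_apply, this, hj, Fin.val_last]
    · have : (i:ℕ) ≠ m := fun h => hi (Fin.ext (by simp [h, Fin.val_last]))
      rw [Matrix.updateRow_ne hi]
      simp [this]
  rw [hupd, Matrix.det_updateRow_add, Matrix.updateRow_eq_self, Matrix.det_updateRow_smul,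
    ← Matrix.adjugate_apply]
  have hxadj : A.det * x = A.adjugate (Fin.last m) 0 := by
    rw [hx, Matrix.invOf_eq_nonsing_inv, Matrix.inv_def]
    simp only [Matrix.smul_apply, smul_eq_mul]
    rw [← mul_assoc, Ring.mul_inverse_cancel _ hA, one_mul]
  have expand : A.det * (A.det + -x * A.adjugate 0 (Fin.last m))
      = A.det ^ 2 - A.adjugate (Fin.last m) 0 * A.adjugate 0 (Fin.last m) := by
    rw [← hxadj]; ring
  rw [expand]
  rw [Matrix.adjugate_fin_succ_eq_det_submatrix, Matrix.adjugate_fin_succ_eq_det_submatrix]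
  have hQ : (A.submatrix (Fin.succAbove 0) (Fin.succAbove (Fin.last m))).det
      = (delTopRight A).det := by rw [delTopRight_eq_submatrix]
  have hR : (A.submatrix (Fin.succAbove (Fin.last m)) (Fin.succAbove 0)).det
      = (delTopRight A).det := by
    rw [delTopRight_eq_submatrix]
    have h2 : A.submatrix (Fin.succAbove (Fin.last m)) (Fin.succAbove 0)
        = (A.submatrix (Fin.succAbove 0) (Fin.succAbove (Fin.last m))).submatrix
          (Fin.revPerm : Equiv.Perm (Fin m)) (Fin.revPerm : Equiv.Perm (Fin m)) := by
      ext i j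
      simp only [Matrix.submatrix_apply, Fin.zero_succAbove, Fin.succAbove_last,
        Fin.revPerm_apply]
      rw [hper]
      congr 1
      · rw [Fin.rev_castSucc]
      · rw [Fin.rev_succ]
    rw [h2, Matrix.det_submatrix_equiv_self]
  rw [hQ, hR]
  simp only [Fin.val_zero, Fin.val_last, zero_add, add_zero]
  rw [show ((-1:ℝ))^m * (delTopRight A).det * ((-1:ℝ)^m * (delTopRight A).det)
      = ((-1:ℝ)^m)^2 * (delTopRight A).det^2 from by ring, ← pow_mul, pow_mul']
  norm_num

lemma chiA_succ_of_unit (k : ℕ) (l : ℝ) (h : IsUnit (chiA k l)) :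
    chiA (k + 1) l = (chiA k l) ^ 2 - (phiA k l) ^ 2 := by
  have hpos : 0 < 2^k := by positivity
  rw [chiA, Tmat_succ, Matrix.reindex_apply,
    Matrix.det_submatrix_equiv_self ((blockEquiv k).symm)]
  have hk := key_det hpos (Tmat k l) (Tmat_rev k l) h
  simp only [Jmat, Jmat']
  exact hk

noncomputable def TP (k : ℕ) : Matrix (Fin (2^k)) (Fin (2^k)) (Polynomial ℝ) :=
  (Amat k).map Polynomial.C
    - (Polynomial.X : Polynomial ℝ) • (1 : Matrix (Fin (2^k)) (Fin (2^k)) (Polynomial ℝ))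

noncomputable def delTopRightP {n : ℕ} (M : Matrix (Fin n) (Fin n) (Polynomial ℝ)) :
    Matrix (Fin (n - 1)) (Fin (n - 1)) (Polynomial ℝ) :=
  Matrix.of fun i j => M ⟨i.1 + 1, by have := i.isLt; omega⟩ ⟨j.1, by have := j.isLt; omega⟩

lemma TP_map (k : ℕ) (l : ℝ) : (TP k).map (Polynomial.eval l) = Tmat k l := by
  ext i j
  simp [TP, Tmat, Matrix.one_apply, apply_ite (Polynomial.eval l)]

lemma chiA_eval (k : ℕ) (l : ℝ) : chiA k l = Polynomial.eval l (TP k).det := by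
  rw [chiA, ← TP_map k l, ← Polynomial.coe_evalRingHom, ← RingHom.mapMatrix_apply,
    ← RingHom.map_det]

lemma phiA_eval (k : ℕ) (l : ℝ) :
    phiA k l = Polynomial.eval l (delTopRightP (TP k)).det := by
  have hmap : (delTopRightP (TP k)).map (Polynomial.eval l) = delTopRight (Tmat k l) := by
    ext i j
    simp only [delTopRightP, delTopRight, Matrix.map_apply, Matrix.of_apply]
    rw [← TP_map k l]
    rfl
  rw [phiA, ← hmap, ← Polynomial.coe_evalRingHom, ← RingHom.mapMatrix_apply, ← RingHom.map_det]

lemma TP_ne_zero (k : ℕ) : (TP k).det ≠ 0 := by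
  have hch : TP k = -(Matrix.charmatrix (Amat k)) := by
    rw [Matrix.charmatrix, neg_sub, TP]
    congr 1
    · ext i j
      simp [Matrix.smul_apply, Matrix.one_apply, Matrix.scalar_apply, Matrix.diagonal_apply,
        apply_ite]
  rw [hch, Matrix.det_neg]
  apply mul_ne_zero
  · exact pow_ne_zero _ (by norm_num)
  · exact ((Amat k).charpoly_monic).ne_zero


/-- `χ_{k+1} = (χ_k)^2 - (φ_k)^2`. -/
theorem chiA_succ (k : ℕ) (l : ℝ) :
    chiA (k + 1) l = (chiA k l) ^ 2 - (phiA k l) ^ 2 := by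
  set P : Polynomial ℝ :=
    (TP (k+1)).det - ((TP k).det ^ 2 - (delTopRightP (TP k)).det ^ 2) with hP
  have hroot : ∀ x : ℝ, chiA k x ≠ 0 → P.IsRoot x := by
    intro x hx
    have h := chiA_succ_of_unit k x (isUnit_iff_ne_zero.mpr hx)
    simp only [Polynomial.IsRoot, hP, Polynomial.eval_sub, Polynomial.eval_pow]
    rw [← chiA_eval, ← chiA_eval, ← phiA_eval]
    rw [h]; ring
  have hPzero : P = 0 := by
    apply Polynomial.eq_zero_of_infinite_isRoot
    apply Set.Infinite.mono (s := {x : ℝ | ¬ ((TP k).det).IsRoot x})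
    · intro x hx
      refine hroot x ?_
      rw [chiA_eval]
      exact hx
    · exact (Polynomial.finite_setOf_isRoot (TP_ne_zero k)).infinite_compl
  have hev := congrArg (Polynomial.eval l) hPzero
  simp only [hP, Polynomial.eval_sub, Polynomial.eval_pow, Polynomial.eval_zero] at hev
  rw [← chiA_eval, ← chiA_eval, ← phiA_eval] at hev
  linarith
end

section
/- With the notation above, ψ_{k+1} = χ_k·ψ_k, where χ_k = det T_k and ψ_k = det P_k with P_k the submatrix of T_k obtained by deleting the bottom row and right column. -/
open Matrix Polynomial

lemma blockEquiv_symm_low (k : ℕ) (v : ℕ) (h : v < 2 ^ k) (h2 : v < 2 ^ (k + 1)) :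
    (blockEquiv k).symm ⟨v, h2⟩ = Sum.inl ⟨v, h⟩ := by
  rw [Equiv.symm_apply_eq]
  apply Fin.ext
  simp [blockEquiv]

lemma blockEquiv_symm_high (k : ℕ) (v : ℕ) (h : v < 2 ^ k) (h2 : 2 ^ k + v < 2 ^ (k + 1)) :
    (blockEquiv k).symm ⟨2 ^ k + v, h2⟩ = Sum.inr ⟨v, h⟩ := by
  rw [Equiv.symm_apply_eq]
  apply Fin.ext
  simp [blockEquiv, Nat.add_comm]

lemma Tmat_succ_apply (k : ℕ) (l : ℝ) (a b : Fin (2 ^ (k + 1))) :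
    Tmat (k + 1) l a b =
      Matrix.fromBlocks (Amat k) (Jmat k) (Jmat' k) (Amat k)
        ((blockEquiv k).symm a) ((blockEquiv k).symm b)
      - l * (if a = b then 1 else 0) := by
  simp [Tmat, Amat, Matrix.sub_apply, Matrix.smul_apply, Matrix.one_apply, mul_ite, mul_one,
    mul_zero]

lemma entry_ll (k : ℕ) (l : ℝ) (i j : Fin (2 ^ k)) (a b : Fin (2 ^ (k + 1)))
    (ha : (a : ℕ) = i.1) (hb : (b : ℕ) = j.1) : Tmat (k + 1) l a b = Tmat k l i j := by
  rcases a with ⟨av, hav⟩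
  rcases b with ⟨bv, hbv⟩
  simp only [Fin.val_mk] at ha hb
  subst ha; subst hb
  rw [Tmat_succ_apply, blockEquiv_symm_low k i.1 i.2, blockEquiv_symm_low k j.1 j.2]
  simp [Tmat, Matrix.sub_apply, Matrix.smul_apply, Matrix.one_apply, Fin.ext_iff]

lemma entry_hl (k : ℕ) (l : ℝ) (i j : Fin (2 ^ k)) (hi : (i : ℕ) < 2 ^ k - 1)
    (a b : Fin (2 ^ (k + 1)))
    (ha : (a : ℕ) = 2 ^ k + i.1) (hb : (b : ℕ) = j.1) : Tmat (k + 1) l a b = 0 := by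
  rcases a with ⟨av, hav⟩
  rcases b with ⟨bv, hbv⟩
  simp only [Fin.val_mk] at ha hb
  subst ha; subst hb
  have hj := j.2
  rw [Tmat_succ_apply, blockEquiv_symm_high k i.1 i.2, blockEquiv_symm_low k j.1 j.2]
  simp only [Matrix.fromBlocks_apply₂₁, Jmat', Matrix.diagonal_apply, Fin.ext_iff, Fin.val_mk]
  split_ifs <;> simp_all <;> omega

lemma entry_hh (k : ℕ) (l : ℝ) (i j : Fin (2 ^ k)) (a b : Fin (2 ^ (k + 1)))
    (ha : (a : ℕ) = 2 ^ k + i.1) (hb : (b : ℕ) = 2 ^ k + j.1) :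
    Tmat (k + 1) l a b = Tmat k l i j := by
  rcases a with ⟨av, hav⟩
  rcases b with ⟨bv, hbv⟩
  simp only [Fin.val_mk] at ha hb
  subst ha; subst hb
  rw [Tmat_succ_apply, blockEquiv_symm_high k i.1 i.2, blockEquiv_symm_high k j.1 j.2]
  simp [Tmat, Matrix.sub_apply, Matrix.smul_apply, Matrix.one_apply, Fin.ext_iff]

/-- `ψ_{k+1} = χ_k * ψ_k`. -/
theorem psiA_succ (k : ℕ) (l : ℝ) :
    psiA (k + 1) l = chiA k l * psiA k l := by
  have hn : 0 < 2 ^ k := pow_pos (by norm_num) k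
  have hsz : 2 ^ k + (2 ^ k - 1) = 2 ^ (k + 1) - 1 := by rw [pow_succ]; omega
  let e : Fin (2 ^ k) ⊕ Fin (2 ^ k - 1) ≃ Fin (2 ^ (k + 1) - 1) :=
    finSumFinEquiv.trans (finCongr hsz)
  have he_inl : ∀ i : Fin (2 ^ k), ((e (Sum.inl i)) : ℕ) = i.1 := by
    intro i; simp [e]
  have he_inr : ∀ j : Fin (2 ^ k - 1), ((e (Sum.inr j)) : ℕ) = 2 ^ k + j.1 := by
    intro j; simp [e]
  set M := delBotRight (Tmat (k + 1) l) with hM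
  have hdet := Matrix.det_submatrix_equiv_self e M
  set N := M.submatrix e e with hN
  have h11 : ∀ i j : Fin (2 ^ k), N (Sum.inl i) (Sum.inl j) = Tmat k l i j := by
    intro i j
    exact entry_ll k l i j _ _ (he_inl i) (he_inl j)
  have h21 : ∀ (i : Fin (2 ^ k - 1)) (j : Fin (2 ^ k)), N (Sum.inr i) (Sum.inl j) = 0 := by
    intro i j
    exact entry_hl k l ⟨i.1, by have := i.2; omega⟩ j (by simpa using i.2) _ _
      (he_inr i) (he_inl j)
  have h22 : ∀ i j : Fin (2 ^ k - 1), N (Sum.inr i) (Sum.inr j) =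
      delBotRight (Tmat k l) i j := by
    intro i j
    exact entry_hh k l ⟨i.1, by have := i.2; omega⟩ ⟨j.1, by have := j.2; omega⟩ _ _
      (he_inr i) (he_inr j)
  have hblocks : N = Matrix.fromBlocks (Tmat k l) N.toBlocks₁₂ 0 (delBotRight (Tmat k l)) := by
    ext x y
    cases x with
    | inl i => cases y with
      | inl j => simpa using h11 i j
      | inr j => simp [Matrix.toBlocks₁₂]
    | inr i => cases y with
      | inl j => simpa using h21 i j
      | inr j => simpa using h22 i j
  calc psiA (k + 1) l = N.det := by rw [hdet]; rfl
    _ = chiA k l * psiA k l := by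
        rw [hblocks, Matrix.det_fromBlocks_zero₂₁]; rfl
end

section
/- Let f(x) = Σ_{k=1}^{∞} ⌊kx⌋/2^k for 0 ≤ x < 1. Then at every rational point x = r/q in (0,1) with r, q coprime positive integers, f has a jump of size f(x+0) - f(x-0) = 1/(2^q - 1), and f is continuous at every irrational point of (0,1). -/
open Filter Set

/-- The Devil's staircase function `f(x) = ∑_{k=1}^∞ ⌊kx⌋ / 2^k`
(the `k = 0` term vanishes, so we may sum over all `k : ℕ`). -/
noncomputable def devilStaircase (x : ℝ) : ℝ :=
  ∑' k : ℕ, (⌊(k : ℝ) * x⌋ : ℝ) / 2 ^ k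

/-!
Each term `⌊k y⌋ / 2^k` is right-continuous in `y`, and its left limit at `x` is smaller by
`2^(-k)` exactly when `k ≥ 1` and `k x ∈ ℤ`. Near `x` the terms are dominated by the summable
`((|x| + 1) k + 1) / 2^k`, so by Tannery's theorem `f` is right-continuous and its jump at `x`
is `∑_{k ≥ 1, k x ∈ ℤ} 2^(-k)`. For irrational `x` the sum is empty; for `x = r/q` in lowest terms
it runs over the multiples of `q` and equals `∑_{m ≥ 1} 2^(-q m) = 1 / (2^q - 1)`.
-/

open Topology

lemma abs_floor_le_abs_add_one (z : ℝ) : |(⌊z⌋ : ℝ)| ≤ |z| + 1 := by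
  rw [abs_le]
  constructor <;> linarith [Int.floor_le z, Int.sub_one_lt_floor z, neg_abs_le z, le_abs_self z]

open scoped Classical in
lemma ceil_sub_one_eq_floor_sub_ite (z : ℝ) :
    ((⌈z⌉ - 1 : ℤ) : ℝ) = ⌊z⌋ - if z ∈ range ((↑) : ℤ → ℝ) then 1 else 0 := by
  by_cases hz : z ∈ range ((↑) : ℤ → ℝ)
  · obtain ⟨n, rfl⟩ := hz
    simp
  · rw [(Int.ceil_eq_floor_add_one_iff_notMem z).2 hz, if_neg hz]
    push_cast
    ring

lemma eventually_floor_const_mul_eq_nhdsGT {c : ℝ} (hc : 0 < c) (x : ℝ) :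
    ∀ᶠ y in 𝓝[>] x, ⌊c * y⌋ = ⌊c * x⌋ := by
  have hmul : Tendsto (c * ·) (𝓝[>] x) (𝓝[≥] (c * x)) :=
    (continuous_const_mul c).continuousWithinAt.tendsto_nhdsWithin
      fun _ hy => (mul_lt_mul_of_pos_left hy hc).le
  exact hmul.eventually (tendsto_pure.1 (tendsto_floor_right_pure_floor _))

lemma eventually_floor_const_mul_eq_nhdsLT {c : ℝ} (hc : 0 < c) (x : ℝ) :
    ∀ᶠ y in 𝓝[<] x, ⌊c * y⌋ = ⌈c * x⌉ - 1 := by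
  have hmul : Tendsto (c * ·) (𝓝[<] x) (𝓝[<] (c * x)) :=
    (continuous_const_mul c).continuousWithinAt.tendsto_nhdsWithin
      fun _ hy => mul_lt_mul_of_pos_left hy hc
  exact hmul.eventually (tendsto_pure.1 (tendsto_floor_left_pure_ceil_sub_one _))

lemma summable_mul_add_one_div_two_pow (C : ℝ) : Summable fun k : ℕ => (C * k + 1) / 2 ^ k := by
  have hgeom : ‖(2⁻¹ : ℝ)‖ < 1 := by norm_num
  refine (((summable_pow_mul_geometric_of_norm_lt_one 1 hgeom).mul_left C).add
    (summable_geometric_of_norm_lt_one hgeom)).congr fun k => ?_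
  simp only [pow_one, inv_pow]
  ring

lemma norm_floor_mul_div_two_pow_le (k : ℕ) (y : ℝ) :
    ‖(⌊(k : ℝ) * y⌋ : ℝ) / 2 ^ k‖ ≤ (|y| * k + 1) / 2 ^ k := by
  rw [norm_div, Real.norm_eq_abs, norm_pow, Real.norm_ofNat]
  gcongr
  calc |(⌊(k : ℝ) * y⌋ : ℝ)| ≤ |(k : ℝ) * y| + 1 := abs_floor_le_abs_add_one _
    _ = |y| * k + 1 := by rw [abs_mul, Nat.abs_cast, mul_comm]

lemma summable_floor_mul_div_two_pow (x : ℝ) :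
    Summable fun k : ℕ => (⌊(k : ℝ) * x⌋ : ℝ) / 2 ^ k :=
  (summable_mul_add_one_div_two_pow |x|).of_norm_bounded (norm_floor_mul_div_two_pow_le · x)

lemma tendsto_devilStaircase {F : Filter ℝ} {x : ℝ} (hF : F ≤ 𝓝 x) {g : ℕ → ℝ}
    (hg : ∀ k : ℕ, Tendsto (fun y : ℝ => (⌊(k : ℝ) * y⌋ : ℝ) / 2 ^ k) F (𝓝 (g k))) :
    Tendsto devilStaircase F (𝓝 (∑' k, g k)) := by
  refine tendsto_tsum_of_dominated_convergence
    (summable_mul_add_one_div_two_pow (|x| + 1)) hg ?_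
  filter_upwards [hF (Metric.ball_mem_nhds x one_pos)] with y hy k
  have hy : |y| ≤ |x| + 1 := by
    have := abs_sub_abs_le_abs_sub y x
    rw [Metric.mem_ball, Real.dist_eq] at hy
    linarith
  refine (norm_floor_mul_div_two_pow_le k y).trans ?_
  gcongr

lemma tendsto_floor_mul_div_two_pow_nhdsGT (x : ℝ) (k : ℕ) :
    Tendsto (fun y : ℝ => (⌊(k : ℝ) * y⌋ : ℝ) / 2 ^ k) (𝓝[>] x)
      (𝓝 ((⌊(k : ℝ) * x⌋ : ℝ) / 2 ^ k)) := by
  rcases k.eq_zero_or_pos with rfl | hk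
  · simp
  refine tendsto_const_nhds.congr' ?_
  filter_upwards [eventually_floor_const_mul_eq_nhdsGT (Nat.cast_pos.2 hk) x] with y hy
  rw [hy]

open scoped Classical in
/-- The jump of the `k`-th term of `devilStaircase` at `x`: `⌊k y⌋` jumps by one at `x` exactly
when `k x` is an integer. -/
noncomputable def devilStaircaseJumpTerm (x : ℝ) (k : ℕ) : ℝ :=
  if k ≠ 0 ∧ (k : ℝ) * x ∈ range ((↑) : ℤ → ℝ) then 1 / 2 ^ k else 0

lemma tendsto_floor_mul_div_two_pow_nhdsLT (x : ℝ) (k : ℕ) :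
    Tendsto (fun y : ℝ => (⌊(k : ℝ) * y⌋ : ℝ) / 2 ^ k) (𝓝[<] x)
      (𝓝 ((⌊(k : ℝ) * x⌋ : ℝ) / 2 ^ k - devilStaircaseJumpTerm x k)) := by
  rcases k.eq_zero_or_pos with rfl | hk
  · simp [devilStaircaseJumpTerm]
  refine tendsto_const_nhds.congr' ?_
  filter_upwards [eventually_floor_const_mul_eq_nhdsLT (Nat.cast_pos.2 hk) x] with y hy
  rw [hy, ceil_sub_one_eq_floor_sub_ite, devilStaircaseJumpTerm]
  split_ifs <;> simp_all [sub_div]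

lemma summable_devilStaircaseJumpTerm (x : ℝ) : Summable (devilStaircaseJumpTerm x) := by
  refine (summable_geometric_two).of_nonneg_of_le (fun k => ?_) fun k => ?_ <;>
    unfold devilStaircaseJumpTerm <;> split_ifs <;> simp

theorem tendsto_devilStaircase_nhdsGT (x : ℝ) :
    Tendsto devilStaircase (𝓝[>] x) (𝓝 (devilStaircase x)) :=
  tendsto_devilStaircase nhdsWithin_le_nhds (tendsto_floor_mul_div_two_pow_nhdsGT x)

theorem tendsto_devilStaircase_nhdsLT (x : ℝ) :
    Tendsto devilStaircase (𝓝[<] x)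
      (𝓝 (devilStaircase x - ∑' k, devilStaircaseJumpTerm x k)) := by
  have h := tendsto_devilStaircase nhdsWithin_le_nhds (tendsto_floor_mul_div_two_pow_nhdsLT x)
  rwa [(summable_floor_mul_div_two_pow x).tsum_sub (summable_devilStaircaseJumpTerm x)] at h

lemma natCast_mul_div_mem_range_intCast_iff {r q : ℕ} (hq : q ≠ 0) (hrq : r.Coprime q)
    (k : ℕ) :
    (k : ℝ) * (r / q) ∈ range ((↑) : ℤ → ℝ) ↔ q ∣ k := by
  have hq' : (q : ℝ) ≠ 0 := Nat.cast_ne_zero.2 hq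
  constructor
  · rintro ⟨n, hn⟩
    have hkr : ((k * r : ℕ) : ℤ) = n * q := by
      rw [mul_div_assoc', eq_div_iff hq'] at hn
      exact_mod_cast hn.symm
    exact hrq.symm.dvd_of_dvd_mul_right (Int.natCast_dvd_natCast.1 ⟨n, by rw [hkr, mul_comm]⟩)
  · rintro ⟨j, rfl⟩
    exact ⟨j * r, by push_cast; field_simp⟩

lemma hasSum_ite_dvd_one_div_two_pow {q : ℕ} (hq : q ≠ 0) :
    HasSum (fun k : ℕ => if k ≠ 0 ∧ q ∣ k then (1 : ℝ) / 2 ^ k else 0) (1 / (2 ^ q - 1)) := by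
  set t : ℝ := 1 / 2 ^ q
  have hq2 : (1 : ℝ) < 2 ^ q := one_lt_pow₀ one_lt_two hq
  have hgeom : HasSum (fun m : ℕ => t * t ^ m) (t * (1 - t)⁻¹) :=
    (hasSum_geometric_of_lt_one (by positivity)
      ((div_lt_one (by positivity)).2 hq2)).mul_left t
  rw [show t * (1 - t)⁻¹ = 1 / (2 ^ q - 1) by
    have : (2 : ℝ) ^ q - 1 ≠ 0 := by linarith
    simp only [t]
    field_simp] at hgeom
  have hinj : Function.Injective fun m : ℕ => q * (m + 1) := fun a b hab => by
    simpa using (Nat.eq_of_mul_eq_mul_left (Nat.pos_of_ne_zero hq) hab)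
  refine (hinj.hasSum_iff fun k hk => if_neg ?_).1 (hgeom.congr_fun fun m => ?_)
  · rintro ⟨hk0, j, rfl⟩
    obtain ⟨m, rfl⟩ := Nat.exists_eq_succ_of_ne_zero (right_ne_zero_of_mul hk0)
    exact hk ⟨m, rfl⟩
  · simp only [Function.comp_apply, dvd_mul_right, and_true, ne_eq, mul_eq_zero, hq,
      Nat.add_one_ne_zero, or_self, not_false_eq_true, if_true, t]
    rw [← pow_succ', one_div_pow, ← pow_mul]

lemma tsum_devilStaircaseJumpTerm_div {r q : ℕ} (hq : q ≠ 0) (hrq : r.Coprime q) :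
    ∑' k, devilStaircaseJumpTerm (r / q) k = 1 / (2 ^ q - 1) := by
  simp only [devilStaircaseJumpTerm, natCast_mul_div_mem_range_intCast_iff hq hrq]
  exact (hasSum_ite_dvd_one_div_two_pow hq).tsum_eq

lemma devilStaircaseJumpTerm_of_irrational {x : ℝ} (hx : Irrational x) (k : ℕ) :
    devilStaircaseJumpTerm x k = 0 :=
  if_neg fun ⟨hk, n, hn⟩ => (hx.natCast_mul hk).ne_int n hn.symm

/-- At every rational point `x = r/q ∈ (0,1)` with `r, q` coprime positive integers, the
Devil's staircase function has a jump `f(x+0) - f(x-0) = 1/(2^q - 1)`, and it is continuous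
at every irrational point of `(0,1)`. -/
theorem devilStaircase_jump_and_continuity :
    (∀ r q : ℕ, 0 < r → 0 < q → Nat.Coprime r q → (r : ℝ) / q ∈ Set.Ioo (0 : ℝ) 1 →
      ∃ L R : ℝ,
        Tendsto devilStaircase (nhdsWithin ((r : ℝ) / q) (Set.Iio ((r : ℝ) / q))) (nhds L) ∧
        Tendsto devilStaircase (nhdsWithin ((r : ℝ) / q) (Set.Ioi ((r : ℝ) / q))) (nhds R) ∧
        R - L = 1 / (2 ^ q - 1)) ∧
    (∀ x : ℝ, x ∈ Set.Ioo (0 : ℝ) 1 → Irrational x → ContinuousAt devilStaircase x) := by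
  refine ⟨fun r q _ hq hrq _ => ⟨_, _, tendsto_devilStaircase_nhdsLT _,
    tendsto_devilStaircase_nhdsGT _, ?_⟩, fun x _ hx => ?_⟩
  · rw [tsum_devilStaircaseJumpTerm_div hq.ne' hrq, sub_sub_cancel]
  · have hleft := tendsto_devilStaircase_nhdsLT x
    simp only [devilStaircaseJumpTerm_of_irrational hx, tsum_zero, sub_zero] at hleft
    exact continuousAt_iff_continuous_left'_right'.2 ⟨hleft, tendsto_devilStaircase_nhdsGT x⟩
end

section
/- Σ_{q=2}^{∞} φ(q)/(2^q - 1) = 1, where φ is Euler's totient function. -/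
open Nat

/-- The double-indexed family `φ(n) (1/2)^(n k)` (zero when `k = 0`). -/
private noncomputable def lamF : ℕ × ℕ → ℝ :=
  fun p => if p.2 = 0 then 0 else (Nat.totient p.1 : ℝ) * (1 / 2 : ℝ) ^ (p.1 * p.2)

private lemma lamF_nonneg : 0 ≤ lamF := by
  intro p
  simp only [Pi.zero_apply]
  unfold lamF
  split
  · exact le_refl 0
  · positivity

private lemma lamF_hasSum (n : ℕ) (hn : 1 ≤ n) :
    HasSum (fun k => lamF (n, k)) ((Nat.totient n : ℝ) / (2 ^ n - 1)) := by
  set x : ℝ := (1 / 2 : ℝ) ^ n with hxdef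
  have hx0 : 0 < x := by positivity
  have hx1 : x < 1 := by
    apply pow_lt_one₀ (by norm_num) (by norm_num)
    omega
  have hgeo : HasSum (fun k : ℕ => (Nat.totient n : ℝ) * x * x ^ k)
      ((Nat.totient n : ℝ) * x * (1 - x)⁻¹) :=
    (hasSum_geometric_of_lt_one hx0.le hx1).mul_left _
  have heq : (fun k : ℕ => (Nat.totient n : ℝ) * x * x ^ k)
      = fun k => lamF (n, k + 1) := by
    funext k
    simp only [lamF, Nat.succ_ne_zero, if_false, hxdef]
    rw [mul_assoc, ← pow_mul, ← pow_add]
    congr 2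
    ring
  rw [heq] at hgeo
  have h2 : HasSum (fun k => lamF (n, k))
      ((Nat.totient n : ℝ) * x * (1 - x)⁻¹ + ∑ i ∈ Finset.range 1, lamF (n, i)) :=
    (hasSum_nat_add_iff 1).mp hgeo
  have h0 : ∑ i ∈ Finset.range 1, lamF (n, i) = 0 := by simp [lamF]
  rw [h0, add_zero] at h2
  convert h2 using 1
  have h2n : (1:ℝ) < 2 ^ n := by
    apply one_lt_pow₀ (by norm_num)
    omega
  have hx : x = ((2:ℝ) ^ n)⁻¹ := by
    rw [hxdef, div_pow, one_pow, one_div]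
  rw [hx]
  have hne : (2:ℝ) ^ n ≠ 0 := by positivity
  have hne1 : (2:ℝ) ^ n - 1 ≠ 0 := by linarith
  have hxlt : ((2:ℝ) ^ n)⁻¹ < 1 := hx ▸ hx1
  have hne2 : 1 - ((2:ℝ) ^ n)⁻¹ ≠ 0 := by
    rw [sub_ne_zero]
    exact fun h => absurd h.symm hxlt.ne
  field_simp

private lemma lamF_summable : Summable lamF := by
  rw [summable_prod_of_nonneg lamF_nonneg]
  constructor
  · intro n
    rcases Nat.eq_zero_or_pos n with rfl | hn
    · have : (fun k => lamF (0, k)) = fun _ => (0:ℝ) := by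
        funext k
        simp [lamF]
      rw [this]
      exact summable_zero
    · exact (lamF_hasSum n hn).summable
  · have hbound : ∀ n : ℕ, ∑' k, lamF (n, k) ≤ 2 * n * (1/2:ℝ) ^ n := by
      intro n
      rcases Nat.eq_zero_or_pos n with rfl | hn
      · have : (fun k => lamF (0, k)) = fun _ => (0:ℝ) := by
          funext k; simp [lamF]
        rw [this, tsum_zero]
        norm_num
      · rw [(lamF_hasSum n hn).tsum_eq]
        have hn' : n - 1 + 1 = n := by omega
        have h1 : (Nat.totient n : ℝ) ≤ n := by
          exact_mod_cast Nat.totient_le n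
        have h1' : (1:ℝ) ≤ 2 ^ (n-1) := one_le_pow₀ (by norm_num)
        have hpn : (2:ℝ) ^ n = 2 ^ (n-1) * 2 := by rw [← pow_succ, hn']
        have h2 : (2:ℝ) ^ (n-1) ≤ 2 ^ n - 1 := by rw [hpn]; linarith
        have hpos : (0:ℝ) < 2 ^ (n-1) := by positivity
        have hpos2 : (0:ℝ) < 2 ^ n - 1 := by linarith
        calc (Nat.totient n : ℝ) / (2 ^ n - 1) ≤ (n : ℝ) / (2 ^ (n-1)) := by
              apply div_le_div₀ (by positivity) h1 hpos h2
          _ = 2 * n * (1/2:ℝ) ^ n := by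
              rw [div_pow, one_pow, hpn]
              field_simp
    apply Summable.of_nonneg_of_le (fun n => tsum_nonneg fun k => lamF_nonneg (n, k)) hbound
    have h : Summable (fun n : ℕ => (n:ℝ) * (1/2:ℝ) ^ n) := by
      have := summable_pow_mul_geometric_of_norm_lt_one (k := 1) (r := (1/2:ℝ)) (by norm_num)
      simpa using this
    simpa [mul_assoc] using h.mul_left 2

private lemma lamF_total : ∑' p : ℕ × ℕ, lamF p = 2 := by
  have hfib := lamF_summable.hasSum.tsum_fiberwise (fun p => p.1 * p.2)
  have hval : (fun m : ℕ => ∑' p : (fun p : ℕ × ℕ => p.1 * p.2) ⁻¹' {m}, lamF p)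
      = fun m : ℕ => (m : ℝ) * (1/2:ℝ) ^ m := by
    funext m
    rcases Nat.eq_zero_or_pos m with rfl | hm
    · have : ∀ p : (fun p : ℕ × ℕ => p.1 * p.2) ⁻¹' {(0:ℕ)}, lamF p = 0 := by
        rintro ⟨⟨a, b⟩, hp⟩
        simp only [Set.mem_preimage, Set.mem_singleton_iff, Nat.mul_eq_zero] at hp
        rcases hp with rfl | rfl
        · simp [lamF]
        · simp [lamF]
      rw [tsum_congr this]
      simp
    · have hset : (fun p : ℕ × ℕ => p.1 * p.2) ⁻¹' {m} = (m.divisorsAntidiagonal : Set (ℕ × ℕ)) := by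
        ext p
        simp [Nat.mem_divisorsAntidiagonal, hm.ne']
      rw [hset, Finset.tsum_subtype' m.divisorsAntidiagonal lamF]
      have hterm : ∀ p ∈ m.divisorsAntidiagonal, lamF p = (Nat.totient p.1 : ℝ) * (1/2:ℝ) ^ m := by
        intro p hp
        obtain ⟨hmul, hm0⟩ := Nat.mem_divisorsAntidiagonal.mp hp
        have hp2 : p.2 ≠ 0 := by
          intro h; rw [h, mul_zero] at hmul; exact hm0 hmul.symm
        simp [lamF, hp2, hmul]
      rw [Finset.sum_congr rfl hterm, ← Finset.sum_mul]
      congr 1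
      rw [Nat.sum_divisorsAntidiagonal (fun a _ => (Nat.totient a : ℝ)), ← Nat.cast_sum]
      exact_mod_cast congrArg (Nat.cast : ℕ → ℝ) (Nat.sum_totient m)
  rw [hval] at hfib
  have hgeo : ∑' m : ℕ, (m : ℝ) * (1/2:ℝ) ^ m = 2 := by
    rw [tsum_coe_mul_geometric_of_norm_lt_one (by norm_num : ‖(1/2:ℝ)‖ < 1)]
    norm_num
  rw [← hfib.tsum_eq, hgeo]

/-- `∑_{q=2}^∞ φ(q) / (2^q - 1) = 1`, where `φ` is Euler's totient function. -/
theorem tsum_totient_div_two_pow_sub_one :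
    ∑' q : ℕ, (Nat.totient (q + 2) : ℝ) / (2 ^ (q + 2) - 1) = 1 := by
  have hS0 : ∑' k, lamF (0, k) = 0 := by
    have : (fun k => lamF (0, k)) = fun _ => (0:ℝ) := by funext k; simp [lamF]
    rw [this]; exact tsum_zero
  have hScol : ∀ n, Summable (fun k => lamF (n, k)) := by
    intro n
    rcases Nat.eq_zero_or_pos n with rfl | hn
    · have : (fun k => lamF (0, k)) = fun _ => (0:ℝ) := by funext k; simp [lamF]
      rw [this]; exact summable_zero
    · exact (lamF_hasSum n hn).summable
  have hStsum : ∑' n : ℕ, ∑' k, lamF (n, k) = 2 := by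
    rw [← Summable.tsum_prod' lamF_summable hScol, lamF_total]
  have hSsummable : Summable (fun n : ℕ => ∑' k, lamF (n, k)) := lamF_summable.prod
  have hkey := Summable.sum_add_tsum_nat_add 2 hSsummable
  rw [hStsum, Finset.sum_range_succ, Finset.sum_range_one, hS0,
    (lamF_hasSum 1 le_rfl).tsum_eq] at hkey
  have hSq : ∀ q : ℕ, (∑' k, lamF (q + 2, k)) = (Nat.totient (q + 2) : ℝ) / (2 ^ (q + 2) - 1) :=
    fun q => (lamF_hasSum (q + 2) (by omega)).tsum_eq
  rw [← tsum_congr hSq]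
  norm_num at hkey
  linarith
end

section
/- For irrational x ∈ (0,1), Σ_{k=1}^{∞} ⌊kx⌋/2^k = Σ_{p=1}^{∞} 2^{-⌊p/x⌋}; and for rational x = r/q ∈ (0,1) with r, q coprime, Σ_{k=1}^{∞} ⌊kx⌋/2^k = Σ_{p=1}^{∞} 2^{-⌊p/x⌋} + 1/(2^q - 1). -/
/-!
Counting `⌊k x⌋ = #{p : p + 1 ≤ k x}` and swapping the order of summation (in `ℝ≥0∞`, where no
summability is needed) gives, for every `x > 0`,
`∑ₖ ⌊k x⌋ / 2ᵏ = ∑ₚ ∑_{k ≥ ⌈(p + 1) / x⌉} 2⁻ᵏ = ∑ₚ 2 ^ (1 - ⌈(p + 1) / x⌉)`.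
Each term equals `2 ^ (-⌊(p + 1) / x⌋)` unless `(p + 1) / x` is an integer, in which case it is
twice that. For irrational `x` this never happens; for `x = r / q` it happens exactly when
`p + 1 = m r`, and these exceptional terms `2 ^ (-m q)` add up to `1 / (2 ^ q - 1)`.
-/

open scoped ENNReal

theorem ENNReal.tsum_ite_lt_mul (n : ℕ) (c : ℝ≥0∞) :
    ∑' p : ℕ, (if p < n then c else 0) = n * c := by
  rw [tsum_eq_sum (s := Finset.range n) (by simp_all),
    Finset.sum_ite_of_true (fun p hp => Finset.mem_range.1 hp)]
  simp

theorem ENNReal.tsum_ite_le_inv_two_pow (n : ℕ) :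
    ∑' k : ℕ, (if n ≤ k then (2⁻¹ : ℝ≥0∞) ^ k else 0) = 2 * 2⁻¹ ^ n := by
  rw [← ENNReal.summable.sum_add_tsum_nat_add',
    Finset.sum_eq_zero (fun k hk => if_neg (by simpa using hk))]
  simp only [le_add_iff_nonneg_left, zero_le, if_true, pow_add, ENNReal.tsum_mul_right,
    ENNReal.tsum_geometric, ENNReal.one_sub_inv_two, inv_inv, zero_add]

theorem ENNReal.tsum_natCast_mul_inv_two_pow_of_lt_iff_le {f g : ℕ → ℕ}
    (h : ∀ k p, p < f k ↔ g p ≤ k) :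
    ∑' k, (f k : ℝ≥0∞) * 2⁻¹ ^ k = ∑' p, 2 * 2⁻¹ ^ g p := by
  calc ∑' k, (f k : ℝ≥0∞) * 2⁻¹ ^ k
      = ∑' k, ∑' p, if g p ≤ k then (2⁻¹ : ℝ≥0∞) ^ k else 0 := by
        simp only [← h, ENNReal.tsum_ite_lt_mul]
    _ = ∑' p, ∑' k, if g p ≤ k then (2⁻¹ : ℝ≥0∞) ^ k else 0 := ENNReal.tsum_comm
    _ = ∑' p, 2 * 2⁻¹ ^ g p := by simp only [ENNReal.tsum_ite_le_inv_two_pow]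

theorem tsum_floor_mul_div_two_pow {x : ℝ} (hx : 0 < x) :
    ∑' k : ℕ, (⌊(k : ℝ) * x⌋ : ℝ) / 2 ^ k =
      ∑' p : ℕ, (2 : ℝ) ^ (1 - ⌈((p : ℝ) + 1) / x⌉) := by
  have hgc (k p : ℕ) : p < ⌊(k : ℝ) * x⌋₊ ↔ ⌈((p : ℝ) + 1) / x⌉₊ ≤ k := by
    rw [← Nat.add_one_le_iff, Nat.le_floor_iff (by positivity), Nat.ceil_le, div_le_iff₀ hx]
    push_cast; rfl
  calc ∑' k : ℕ, (⌊(k : ℝ) * x⌋ : ℝ) / 2 ^ k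
      = (∑' k : ℕ, (⌊(k : ℝ) * x⌋₊ : ℝ≥0∞) * 2⁻¹ ^ k).toReal := by
        rw [ENNReal.tsum_toReal_eq (fun _ => by finiteness)]
        refine tsum_congr fun k => ?_
        rw [← natCast_floor_eq_intCast_floor (by positivity)]
        simp [div_eq_mul_inv]
    _ = (∑' p : ℕ, 2 * (2⁻¹ : ℝ≥0∞) ^ ⌈((p : ℝ) + 1) / x⌉₊).toReal := by
        rw [ENNReal.tsum_natCast_mul_inv_two_pow_of_lt_iff_le hgc]
    _ = ∑' p : ℕ, (2 : ℝ) ^ (1 - ⌈((p : ℝ) + 1) / x⌉) := by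
        rw [ENNReal.tsum_toReal_eq (fun _ => by finiteness)]
        refine tsum_congr fun p => ?_
        rw [← Int.natCast_ceil_eq_ceil (by positivity), zpow_sub₀ two_ne_zero]
        simp [div_eq_mul_inv]

theorem two_zpow_one_sub_ceil_of_notMem {y : ℝ} (hy : y ∉ Set.range Int.cast) :
    (2 : ℝ) ^ (1 - ⌈y⌉) = 2 ^ (-⌊y⌋) := by
  rw [(Int.ceil_eq_floor_add_one_iff_notMem y).2 hy]
  ring_nf

theorem two_zpow_one_sub_ceil_intCast (m : ℤ) :
    (2 : ℝ) ^ (1 - ⌈(m : ℝ)⌉) = 2 ^ (-⌊(m : ℝ)⌋) + 2 ^ (-⌊(m : ℝ)⌋) := by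
  rw [Int.ceil_intCast, Int.floor_intCast, zpow_sub₀ two_ne_zero, zpow_neg]
  ring

theorem natCast_div_div_mem_range_intCast_iff {n r q : ℕ} (hr : 0 < r) (hq : 0 < q)
    (hrq : r.Coprime q) : (n : ℝ) / ((r : ℝ) / q) ∈ Set.range Int.cast ↔ r ∣ n := by
  constructor
  · rintro ⟨m, hm⟩
    have hmn : (n * q : ℝ) = r * m := by
      rw [hm]; field_simp
    have hdvd : (r : ℤ) ∣ (n * q : ℕ) := ⟨m, by push_cast; exact_mod_cast hmn⟩
    exact hrq.dvd_of_dvd_mul_right (Int.natCast_dvd_natCast.1 hdvd)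
  · rintro ⟨c, rfl⟩
    exact ⟨c * q, by push_cast; field_simp⟩

theorem two_zpow_one_sub_ceil_natCast_div_div {n r q : ℕ} (hr : 0 < r) (hq : 0 < q)
    (hrq : r.Coprime q) :
    (2 : ℝ) ^ (1 - ⌈(n : ℝ) / ((r : ℝ) / q)⌉) = 2 ^ (-⌊(n : ℝ) / ((r : ℝ) / q)⌋) +
      if r ∣ n then 2 ^ (-⌊(n : ℝ) / ((r : ℝ) / q)⌋) else 0 := by
  by_cases hn : r ∣ n
  · obtain ⟨m, hm⟩ := (natCast_div_div_mem_range_intCast_iff hr hq hrq).2 hn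
    rw [if_pos hn, ← hm, two_zpow_one_sub_ceil_intCast]
  · rw [if_neg hn, add_zero, two_zpow_one_sub_ceil_of_notMem
      (mt (natCast_div_div_mem_range_intCast_iff hr hq hrq).1 hn)]

theorem summable_two_zpow_neg_floor_succ_div {x : ℝ} (hx0 : 0 < x) (hx1 : x ≤ 1) :
    Summable fun p : ℕ => (2 : ℝ) ^ (-⌊((p : ℝ) + 1) / x⌋) := by
  refine summable_geometric_two.of_nonneg_of_le (fun _ => by positivity) fun p => ?_
  have hp : (p : ℤ) ≤ ⌊((p : ℝ) + 1) / x⌋ := by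
    rw [Int.le_floor, le_div_iff₀ hx0]
    push_cast
    nlinarith
  calc (2 : ℝ) ^ (-⌊((p : ℝ) + 1) / x⌋) ≤ 2 ^ (-(p : ℤ)) :=
        zpow_le_zpow_right₀ one_le_two (neg_le_neg hp)
    _ = (1 / 2) ^ p := by simp

theorem tsum_ite_dvd_succ {M : Type*} [AddCommMonoid M] [TopologicalSpace M] {r : ℕ}
    (hr : 0 < r) (f : ℕ → M) :
    ∑' p, (if r ∣ p + 1 then f (p + 1) else 0) = ∑' m, f ((m + 1) * r) := by
  have hsucc (m : ℕ) : (m + 1) * r - 1 + 1 = (m + 1) * r :=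
    Nat.sub_add_cancel (Nat.mul_pos m.succ_pos hr)
  have hinj : Function.Injective fun m : ℕ => (m + 1) * r - 1 := by
    intro a b hab
    have := congrArg (· + 1) hab
    simp only [hsucc] at this
    exact Nat.succ_injective (Nat.eq_of_mul_eq_mul_right hr this)
  rw [← hinj.tsum_eq]
  · simp only [hsucc, Dvd.intro_left _ rfl, if_true]
  · rintro p hp
    obtain ⟨c, hc⟩ : r ∣ p + 1 := by by_contra h; exact hp (if_neg h)
    obtain ⟨m, rfl⟩ : ∃ m, c = m + 1 :=
      Nat.exists_eq_succ_of_ne_zero (by rintro rfl; simp at hc)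
    exact ⟨m, by simp only; rw [mul_comm, ← hc]; rfl⟩

theorem tsum_inv_pow_succ {b : ℝ} (hb : 1 < b) : ∑' m : ℕ, (b ^ (m + 1))⁻¹ = 1 / (b - 1) := by
  have hb' : b⁻¹ < 1 := inv_lt_one_of_one_lt₀ hb
  simp_rw [← inv_pow, pow_succ]
  rw [tsum_mul_right, tsum_geometric_of_lt_one (by positivity) hb']
  field_simp

theorem tsum_two_zpow_neg_floor_mul_div_div {r q : ℕ} (hr : 0 < r) (hq : 0 < q) :
    ∑' m : ℕ, (2 : ℝ) ^ (-⌊(((m + 1) * r : ℕ) : ℝ) / ((r : ℝ) / q)⌋) = 1 / (2 ^ q - 1) := by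
  have hterm (m : ℕ) :
      (2 : ℝ) ^ (-⌊(((m + 1) * r : ℕ) : ℝ) / ((r : ℝ) / q)⌋) = ((2 ^ q) ^ (m + 1))⁻¹ := by
    have hint : (((m + 1) * r : ℕ) : ℝ) / ((r : ℝ) / q) = (((m + 1) * q : ℕ) : ℤ) := by
      push_cast; field_simp
    rw [hint, Int.floor_intCast, zpow_neg, zpow_natCast, ← pow_mul, mul_comm]
  rw [tsum_congr hterm, tsum_inv_pow_succ (one_lt_pow₀ one_lt_two hq.ne')]

/-- For irrational `x ∈ (0,1)`, `∑_{k=1}^∞ ⌊kx⌋/2^k = ∑_{p=1}^∞ 2^{-⌊p/x⌋}`; for rational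
`x = r/q ∈ (0,1)` with `r, q` coprime, the left-hand side exceeds the right-hand side
by `1/(2^q - 1)`. -/
theorem devilStaircase_alt_formula :
    (∀ x : ℝ, x ∈ Set.Ioo (0 : ℝ) 1 → Irrational x →
      ∑' k : ℕ, (⌊(k : ℝ) * x⌋ : ℝ) / 2 ^ k =
        ∑' p : ℕ, (2 : ℝ) ^ (-⌊((p : ℝ) + 1) / x⌋)) ∧
    (∀ r q : ℕ, 0 < r → 0 < q → Nat.Coprime r q → (r : ℝ) / q ∈ Set.Ioo (0 : ℝ) 1 →
      ∑' k : ℕ, (⌊(k : ℝ) * ((r : ℝ) / q)⌋ : ℝ) / 2 ^ k =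
        (∑' p : ℕ, (2 : ℝ) ^ (-⌊((p : ℝ) + 1) / ((r : ℝ) / q)⌋)) + 1 / (2 ^ q - 1)) := by
  refine ⟨fun x ⟨hx0, _⟩ hirr => ?_, fun r q hr hq hrq ⟨hx0, hx1⟩ => ?_⟩
  · rw [tsum_floor_mul_div_two_pow hx0]
    refine tsum_congr fun p => two_zpow_one_sub_ceil_of_notMem ?_
    rintro ⟨m, hm⟩
    exact (hirr.natCast_div p.succ_ne_zero).ne_int m (by push_cast; exact hm.symm)
  · have hsplit (p : ℕ) : (2 : ℝ) ^ (1 - ⌈((p : ℝ) + 1) / ((r : ℝ) / q)⌉) =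
        2 ^ (-⌊((p : ℝ) + 1) / ((r : ℝ) / q)⌋) +
          if r ∣ p + 1 then 2 ^ (-⌊((p + 1 : ℕ) : ℝ) / ((r : ℝ) / q)⌋) else 0 := by
      rw [← Nat.cast_add_one]
      exact two_zpow_one_sub_ceil_natCast_div_div hr hq hrq
    have hsum := summable_two_zpow_neg_floor_succ_div hx0 hx1.le
    have hsum_exc : Summable fun p : ℕ =>
        if r ∣ p + 1 then (2 : ℝ) ^ (-⌊((p + 1 : ℕ) : ℝ) / ((r : ℝ) / q)⌋) else 0 := by
      refine hsum.of_nonneg_of_le (fun p => by positivity) fun p => ?_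
      split_ifs
      · push_cast; rfl
      · positivity
    rw [tsum_floor_mul_div_two_pow hx0, tsum_congr hsplit, hsum.tsum_add hsum_exc,
      tsum_ite_dvd_succ hr (fun n : ℕ => (2 : ℝ) ^ (-⌊(n : ℝ) / ((r : ℝ) / q)⌋)),
      tsum_two_zpow_neg_floor_mul_div_div hr hq]
end
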